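/- arXiv:2004.13501 — 3 statements merged into one kernel-verified Lean document; each statement's English description precedes it below -/
import Mathlib

section
/- Let X_1, X_2, … be i.i.d. real-valued random variables on a probability space (Ω, 𝓕, P) such that for P-almost every ω one has lim_{c→∞} sup_{n∈ℕ} n^{-1} ∑_{i=1}^{n} |X_i(ω)| · 1_{[c,∞)}(|X_i(ω)|) = 0. Then X_1 is integrable (X_1 ∈ L^1(P)) and n^{-1} ∑_{i=1}^{n} X_i converges P-almost surely to E[X_1]. -/
/-!
The strong law for the bounded i.i.d. variables `min |X i| M` identifies `𝔼[min |X 0| M]` with the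
almost sure limit of their sample means. At one `ω` where the hypothesis also holds, pick `c` with
every tail average at most `1`: then every sample mean of `|X i ω|` is at most `c + 1`, so the
truncated expectations are bounded uniformly in `M`, and monotone convergence makes `X 0`
integrable. Kolmogorov's strong law then applies to `X` itself.
-/

open MeasureTheory ProbabilityTheory Filter Finset Topology

lemma le_add_mul_indicator_Ici {a c : ℝ} (hc : 0 ≤ c) :
    a ≤ c + a * Set.indicator (Set.Ici c) 1 a := by
  by_cases h : c ≤ a
  · rw [Set.indicator_of_mem (Set.mem_Ici.mpr h), Pi.one_apply, mul_one]
    linarith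
  · rw [Set.indicator_of_notMem (fun h' => h (Set.mem_Ici.mp h')), mul_zero, add_zero]
    linarith

lemma average_le_add_of_tail_average_le {x : ℕ → ℝ} {c δ : ℝ} (hc : 0 ≤ c)
    (htail : ∀ n : ℕ,
      (n : ℝ)⁻¹ * ∑ i ∈ range n, x i * Set.indicator (Set.Ici c) 1 (x i) ≤ δ)
    (n : ℕ) : (n : ℝ)⁻¹ * ∑ i ∈ range n, x i ≤ c + δ := by
  rcases n.eq_zero_or_pos with rfl | hn
  · simpa using add_nonneg hc (by simpa using htail 0)
  calc (n : ℝ)⁻¹ * ∑ i ∈ range n, x i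
      ≤ (n : ℝ)⁻¹ * ∑ i ∈ range n, (c + x i * Set.indicator (Set.Ici c) 1 (x i)) := by
        gcongr with i; exact le_add_mul_indicator_Ici hc
    _ = c + (n : ℝ)⁻¹ * ∑ i ∈ range n, x i * Set.indicator (Set.Ici c) 1 (x i) := by
        rw [sum_add_distrib, sum_const, card_range, nsmul_eq_mul, mul_add,
          inv_mul_cancel_left₀ (Nat.cast_ne_zero.mpr hn.ne')]
    _ ≤ c + δ := by gcongr; exact htail n

lemma exists_forall_average_le_of_tendsto_tail_average {x : ℕ → ℝ}
    (h : Tendsto (fun c : ℝ => ⨆ n : ℕ, ENNReal.ofReal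
      ((n : ℝ)⁻¹ * ∑ i ∈ range n, x i * Set.indicator (Set.Ici c) 1 (x i))) atTop (𝓝 0)) :
    ∃ C, ∀ n : ℕ, (n : ℝ)⁻¹ * ∑ i ∈ range n, x i ≤ C := by
  obtain ⟨c, hc, hc1⟩ := ((eventually_ge_atTop 0).and (h.eventually_lt_const one_pos)).exists
  refine ⟨c + 1, average_le_add_of_tail_average_le hc fun n => ?_⟩
  exact ENNReal.ofReal_le_one.mp ((le_iSup _ n).trans hc1.le)

lemma integrable_min_abs_natCast {α : Type*} [MeasurableSpace α] {μ : Measure α}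
    [IsFiniteMeasure μ] {f : α → ℝ} (hf : AEMeasurable f μ) (M : ℕ) :
    Integrable (fun a => min |f a| M) μ :=
  .of_bound (hf.abs.min aemeasurable_const).aestronglyMeasurable M <| ae_of_all _ fun a => by
    rw [Real.norm_of_nonneg (by positivity)]
    exact min_le_right _ _

lemma integrable_of_integral_min_abs_le {α : Type*} [MeasurableSpace α] {μ : Measure α}
    [IsFiniteMeasure μ] {f : α → ℝ} (hf : AEMeasurable f μ) {C : ℝ}
    (hC : ∀ M : ℕ, ∫ a, min |f a| M ∂μ ≤ C) : Integrable f μ := by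
  have htend : Tendsto (fun M : ℕ => ∫⁻ a, ENNReal.ofReal (min |f a| M) ∂μ) atTop
      (𝓝 (∫⁻ a, ‖f a‖ₑ ∂μ)) := by
    refine lintegral_tendsto_of_tendsto_of_monotone
      (fun M => (hf.abs.min aemeasurable_const).ennreal_ofReal)
      (ae_of_all _ fun a M N hMN => ENNReal.ofReal_le_ofReal (by gcongr))
      (ae_of_all _ fun a => ?_)
    rw [Real.enorm_eq_ofReal_abs]
    refine ENNReal.tendsto_ofReal
      (tendsto_atTop_of_eventually_const (i₀ := ⌈|f a|⌉₊) fun M hM => ?_)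
    exact min_eq_left ((Nat.le_ceil _).trans (by exact_mod_cast hM))
  refine ⟨hf.aestronglyMeasurable,
    (le_of_tendsto' htend fun M => ?_).trans_lt (ENNReal.ofReal_lt_top (r := C))⟩
  rw [← ofReal_integral_eq_lintegral_ofReal (integrable_min_abs_natCast hf M)
    (ae_of_all _ fun a => by positivity)]
  exact ENNReal.ofReal_le_ofReal (hC M)

theorem ae_tendsto_average_min_abs {Ω : Type*} [MeasurableSpace Ω] {μ : Measure Ω}
    [IsFiniteMeasure μ] (X : ℕ → Ω → ℝ) (hindep : Pairwise (Function.onFun (· ⟂ᵢ[μ] ·) X))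
    (hident : ∀ i, IdentDistrib (X i) (X 0) μ μ) :
    ∀ᵐ ω ∂μ, ∀ M : ℕ, Tendsto (fun n : ℕ => (∑ i ∈ range n, min |X i ω| M) / n) atTop
      (𝓝 (∫ ω, min |X 0 ω| M ∂μ)) := by
  refine ae_all_iff.mpr fun M => ?_
  have hg : Measurable fun x : ℝ => min |x| (M : ℝ) := measurable_abs.min measurable_const
  exact strong_law_ae_real (fun i ω => min |X i ω| M)
    (integrable_min_abs_natCast (hident 0).aemeasurable_fst M)
    (fun i j hij => (hindep hij).comp hg hg) (fun i => (hident i).comp hg)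

theorem strong_law_of_uniform_integrability_general
    {Ω : Type*} [MeasurableSpace Ω] (P : Measure Ω) [IsProbabilityMeasure P]
    (X : ℕ → Ω → ℝ)
    (hindep : iIndepFun X P)
    (hident : ∀ i, IdentDistrib (X i) (X 0) P P)
    (hUI : ∀ᵐ ω ∂P, Tendsto
      (fun c : ℝ => ⨆ n : ℕ, ENNReal.ofReal
        ((n : ℝ)⁻¹ * ∑ i ∈ range n,
          |X i ω| * Set.indicator (Set.Ici c) 1 |X i ω|))
      atTop (nhds 0)) :
    Integrable (X 0) P ∧
      ∀ᵐ ω ∂P, Tendsto (fun n : ℕ => (n : ℝ)⁻¹ * ∑ i ∈ range n, X i ω)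
        atTop (nhds (∫ ω, X 0 ω ∂P)) := by
  have hpair : Pairwise (Function.onFun (· ⟂ᵢ[P] ·) X) := fun i j hij => hindep.indepFun hij
  have hint : Integrable (X 0) P := by
    obtain ⟨ω, hω, hlim⟩ := (hUI.and (ae_tendsto_average_min_abs X hpair hident)).exists
    obtain ⟨C, hC⟩ := exists_forall_average_le_of_tendsto_tail_average hω
    refine integrable_of_integral_min_abs_le (hident 0).aemeasurable_fst (C := C) fun M =>
      le_of_tendsto' (hlim M) fun n => ?_
    calc (∑ i ∈ range n, min |X i ω| M) / n = (n : ℝ)⁻¹ * ∑ i ∈ range n, min |X i ω| M :=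
          div_eq_inv_mul ..
      _ ≤ (n : ℝ)⁻¹ * ∑ i ∈ range n, |X i ω| := by gcongr; exact min_le_left _ _
      _ ≤ C := hC n
  refine ⟨hint, ?_⟩
  filter_upwards [strong_law_ae_real X hint hpair hident] with ω hω
  simpa only [div_eq_inv_mul] using hω

/-- **A strong law of large numbers of Kolmogorov's type.**
If `X 0, X 1, …` are i.i.d. real random variables such that, almost surely,
`lim_{c → ∞} sup_{n} n⁻¹ ∑_{i < n} |X i| · 1_{[c,∞)}(|X i|) = 0`,
then `X 0` is integrable and the sample means converge almost surely to `𝔼[X 0]`. -/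
theorem strong_law_of_uniform_integrability
    {Ω : Type*} [MeasurableSpace Ω] (P : Measure Ω) [IsProbabilityMeasure P]
    (X : ℕ → Ω → ℝ) (hmeas : ∀ i, Measurable (X i))
    (hindep : iIndepFun X P)
    (hident : ∀ i, IdentDistrib (X i) (X 0) P P)
    (hUI : ∀ᵐ ω ∂P, Tendsto
      (fun c : ℝ => ⨆ n : ℕ, ENNReal.ofReal
        ((n : ℝ)⁻¹ * ∑ i ∈ range n,
          |X i ω| * Set.indicator (Set.Ici c) 1 |X i ω|))
      atTop (nhds 0)) :
    Integrable (X 0) P ∧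
      ∀ᵐ ω ∂P, Tendsto (fun n : ℕ => (n : ℝ)⁻¹ * ∑ i ∈ range n, X i ω)
        atTop (nhds (∫ ω, X 0 ω ∂P)) :=
  strong_law_of_uniform_integrability_general P X hindep hident hUI
end

section
/- Let X_1, X_2, … be i.i.d. real-valued random variables on a probability space (Ω, 𝓕, P), and for each n ∈ ℕ and ω ∈ Ω let P̂_n(·; ω) := n^{-1} ∑_{i=1}^{n} δ_{X_i(ω)} be the empirical distribution, a Borel probability measure on ℝ. Then for P-almost every ω ∈ Ω, the sequence of measures P̂_n(·; ω) converges weakly (in the topology of weak convergence of probability measures on ℝ) to the law ℙ of X_1. -/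
/-!
For a Borel set `s`, the empirical measure of `s` is the sample mean of the i.i.d. indicators
`1_s (X i)`, so the strong law of large numbers gives `P̂ n s → ℙ s` almost surely. Taking the
countably many open intervals with rational endpoints at once, almost surely `P̂ n` converges on a
π-system of open sets that contains a neighbourhood basis of every point; by inclusion–exclusion
and inner approximation of open sets, the portmanteau theorem turns this into weak convergence.
-/

open MeasureTheory ProbabilityTheory Filter Finset BoundedContinuousFunction ENNReal Topology

namespace MeasureTheory

variable {Ω α : Type*} [MeasurableSpace Ω] [MeasurableSpace α]

noncomputable def empiricalMeasure (x : ℕ → α) (n : ℕ) : Measure α :=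
  (n : ℝ≥0∞)⁻¹ • ∑ i ∈ range n, Measure.dirac (x i)

lemma empiricalMeasure_real_apply (x : ℕ → α) (n : ℕ) {s : Set α} (hs : MeasurableSet s) :
    (empiricalMeasure x n).real s = (n : ℝ)⁻¹ • ∑ i ∈ range n, s.indicator 1 (x i) := by
  simp only [empiricalMeasure, measureReal_def, Measure.smul_apply, Measure.finsetSum_apply,
    Measure.dirac_apply' _ hs, smul_eq_mul, ENNReal.toReal_mul, ENNReal.toReal_inv,
    ENNReal.toReal_natCast]
  rw [ENNReal.toReal_sum fun i _ => by by_cases h : x i ∈ s <;> simp [h]]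
  congr! with i
  by_cases h : x i ∈ s <;> simp [h]

instance isProbabilityMeasure_empiricalMeasure_succ (x : ℕ → α) (n : ℕ) :
    IsProbabilityMeasure (empiricalMeasure x (n + 1)) := by
  constructor
  simp [empiricalMeasure, ENNReal.inv_mul_cancel]

theorem ae_tendsto_empiricalMeasure_real_apply {P : Measure Ω} [IsFiniteMeasure P]
    {X : ℕ → Ω → α} (hindep : Pairwise fun i j => X i ⟂ᵢ[P] X j)
    (hident : ∀ i, IdentDistrib (X i) (X 0) P P) {s : Set α} (hs : MeasurableSet s) :
    ∀ᵐ ω ∂P, Tendsto (fun n => (empiricalMeasure (X · ω) n).real s) atTop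
      (𝓝 ((P.map (X 0)).real s)) := by
  have hind : Measurable (s.indicator (1 : α → ℝ)) := measurable_one.indicator hs
  have hX₀ : AEMeasurable (X 0) P := (hident 0).aemeasurable_fst
  have hmean : P[fun ω => s.indicator 1 (X 0 ω)] = (P.map (X 0)).real s := by
    rw [← integral_indicator_one hs, integral_map hX₀ hind.aestronglyMeasurable]
  have hint : Integrable (fun ω => s.indicator (1 : α → ℝ) (X 0 ω)) P :=
    (integrable_map_measure hind.aestronglyMeasurable hX₀).mp
      ((integrable_const 1).indicator hs)
  have hslln := strong_law_ae (fun i ω => s.indicator (1 : α → ℝ) (X i ω)) hint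
    (fun i j hij => (hindep hij).comp hind hind) (fun i => (hident i).comp hind)
  filter_upwards [hslln] with ω hω
  simpa only [empiricalMeasure_real_apply _ _ hs, hmean] using hω

theorem tendsto_integral_of_tendsto_measureReal_Ioo_rat {μs : ℕ → Measure ℝ}
    [∀ n, IsProbabilityMeasure (μs n)] {μ : Measure ℝ} [IsProbabilityMeasure μ]
    (h : ∀ q r : ℚ, q < r →
      Tendsto (fun n => (μs n).real (Set.Ioo q r)) atTop (𝓝 (μ.real (Set.Ioo q r))))
    (f : ℝ →ᵇ ℝ) : Tendsto (fun n => ∫ x, f x ∂μs n) atTop (𝓝 (∫ x, f x ∂μ)) := by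
  let νs : ℕ → ProbabilityMeasure ℝ := fun n => ⟨μs n, inferInstance⟩
  let ν : ProbabilityMeasure ℝ := ⟨μ, inferInstance⟩
  have hweak : Tendsto νs atTop (𝓝 ν) := by
    refine Real.isPiSystem_Ioo_rat.tendsto_probabilityMeasure_of_tendsto_of_mem ?_ ?_ ?_
    · exact fun s hs => Real.isTopologicalBasis_Ioo_rat.isOpen hs |>.measurableSet
    · intro u hu x hx
      obtain ⟨v, hv, hxv, hvu⟩ := Real.isTopologicalBasis_Ioo_rat.exists_subset_of_mem_open hx hu
      exact ⟨v, hv, (Real.isTopologicalBasis_Ioo_rat.isOpen hv).mem_nhds hxv, hvu⟩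
    · simp only [Set.mem_iUnion, Set.mem_singleton_iff]
      rintro _ ⟨q, r, hqr, rfl⟩
      rw [← NNReal.tendsto_coe]
      exact h q r hqr
  exact ProbabilityMeasure.tendsto_iff_forall_integral_tendsto.mp hweak f

end MeasureTheory

theorem empirical_measures_tendsto_law_general
    {Ω : Type*} [MeasurableSpace Ω] (P : Measure Ω) [IsProbabilityMeasure P]
    (X : ℕ → Ω → ℝ)
    (hindep : iIndepFun X P)
    (hident : ∀ i, IdentDistrib (X i) (X 0) P P) :
    ∀ᵐ ω ∂P, ∀ f : ℝ →ᵇ ℝ,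
      Tendsto
        (fun n : ℕ => ∫ y, f y ∂((n : ℝ≥0∞)⁻¹ •
          ∑ i ∈ range n, Measure.dirac (X i ω)))
        atTop (nhds (∫ x, f x ∂(P.map (X 0)))) := by
  have : IsProbabilityMeasure (P.map (X 0)) :=
    Measure.isProbabilityMeasure_map (hident 0).aemeasurable_fst
  have hIoo : ∀ᵐ ω ∂P, ∀ q r : ℚ,
      Tendsto (fun n => (empiricalMeasure (X · ω) n).real (Set.Ioo q r)) atTop
        (𝓝 ((P.map (X 0)).real (Set.Ioo q r))) := by
    simp only [ae_all_iff]
    exact fun q r => ae_tendsto_empiricalMeasure_real_apply (fun i j hij => hindep.indepFun hij)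
      hident measurableSet_Ioo
  filter_upwards [hIoo] with ω hω f
  -- `empiricalMeasure x 0 = 0` is not a probability measure, hence the shift by one.
  refine (tendsto_add_atTop_iff_nat 1).mp ?_
  exact tendsto_integral_of_tendsto_measureReal_Ioo_rat
    (μs := fun n => empiricalMeasure (X · ω) (n + 1))
    (fun q r _ => (hω q r).comp (tendsto_add_atTop_nat 1)) f

/-- For i.i.d. real random variables, the empirical distributions
`P̂ n ω := n⁻¹ ∑_{i < n} δ_{X i ω}` converge weakly, almost surely, to the law of `X 0`:
for `P`-a.e. `ω`, `∫ f dP̂ n ω → ∫ f d(law of X 0)` for every bounded continuous `f : ℝ → ℝ`. -/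
theorem empirical_measures_tendsto_law
    {Ω : Type*} [MeasurableSpace Ω] (P : Measure Ω) [IsProbabilityMeasure P]
    (X : ℕ → Ω → ℝ) (hmeas : ∀ i, Measurable (X i))
    (hindep : iIndepFun X P)
    (hident : ∀ i, IdentDistrib (X i) (X 0) P P) :
    ∀ᵐ ω ∂P, ∀ f : ℝ →ᵇ ℝ,
      Tendsto
        (fun n : ℕ => ∫ y, f y ∂((n : ℝ≥0∞)⁻¹ •
          ∑ i ∈ range n, Measure.dirac (X i ω)))
        atTop (nhds (∫ x, f x ∂(P.map (X 0)))) :=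
  empirical_measures_tendsto_law_general P X hindep hident
end

section
/- Let X_1, X_2, … be i.i.d. real-valued random variables on a probability space (Ω, 𝓕, P) such that for P-almost every ω one has lim_{c→∞} sup_{n∈ℕ} n^{-1} ∑_{i=1}^{n} |X_i(ω)| · 1_{[c,∞)}(|X_i(ω)|) = 0, and for each n ∈ ℕ and ω ∈ Ω let P̂_n(·; ω) := n^{-1} ∑_{i=1}^{n} δ_{X_i(ω)} be the empirical distribution on ℝ. Then X_1 is integrable and, for P-almost every ω ∈ Ω, ∫_{ℝ} y dP̂_n(y; ω) → ∫_{ℝ} x dℙ(x) = E[X_1] as n → ∞, where ℙ is the law of X_1. -/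
/-!
If `X 0` were not integrable, then `∑ P(|X 0| ≥ n + 1) = ∞`, so by the second Borel–Cantelli
lemma `|X n| ≥ n + 1` infinitely often, almost surely. The hypothesis rules this out: once the
supremum over `m` of the tail means at level `c` is below `1`, the single term `i = n` of the
mean at time `n + 1` forces `|X n| < n + 1` whenever `|X n| ≥ c`. With `X 0` integrable, the
first moment of the empirical distribution is the sample mean, and the strong law of large numbers
applies.
-/

open MeasureTheory ProbabilityTheory Filter Finset ENNReal

lemma ofReal_le_one_add_tsum_indicator (t : ℝ) :
    ENNReal.ofReal t ≤ 1 + ∑' n : ℕ, {s : ℝ | (n : ℝ) + 1 ≤ s}.indicator 1 t := by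
  have hfloor : ∀ n ∈ range ⌊t⌋₊, {s : ℝ | (n : ℝ) + 1 ≤ s}.indicator (1 : ℝ → ℝ≥0∞) t = 1 :=
    fun n hn ↦ Set.indicator_of_mem (by
      simpa using (Nat.le_floor_iff' n.succ_ne_zero).1 (Finset.mem_range.1 hn)) _
  calc ENNReal.ofReal t ≤ ENNReal.ofReal (1 + ⌊t⌋₊) :=
        ofReal_le_ofReal (by linarith [Nat.lt_floor_add_one t])
    _ = 1 + ∑ n ∈ range ⌊t⌋₊, {s : ℝ | (n : ℝ) + 1 ≤ s}.indicator 1 t := by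
        rw [sum_congr rfl hfloor, ofReal_add zero_le_one (Nat.cast_nonneg _)]
        simp
    _ ≤ _ := by gcongr; exact ENNReal.sum_le_tsum _

lemma integrable_of_tsum_measure_add_one_le_abs_ne_top {Ω : Type*} [MeasurableSpace Ω]
    {P : Measure Ω} [IsFiniteMeasure P] {Y : Ω → ℝ} (hY : Measurable Y)
    (h : ∑' n : ℕ, P {ω | (n : ℝ) + 1 ≤ |Y ω|} ≠ ∞) : Integrable Y P := by
  have hs (n : ℕ) : MeasurableSet {ω | (n : ℝ) + 1 ≤ |Y ω|} :=
    measurableSet_le measurable_const hY.abs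
  refine ⟨hY.aestronglyMeasurable, ?_⟩
  calc ∫⁻ ω, ‖Y ω‖ₑ ∂P
      ≤ ∫⁻ ω, 1 + ∑' n : ℕ, {ω | (n : ℝ) + 1 ≤ |Y ω|}.indicator 1 ω ∂P :=
        lintegral_mono fun ω ↦ by
          simpa [Real.enorm_eq_ofReal_abs, Set.indicator_apply] using
            ofReal_le_one_add_tsum_indicator |Y ω|
    _ = P Set.univ + ∑' n : ℕ, P {ω | (n : ℝ) + 1 ≤ |Y ω|} := by
        rw [lintegral_add_left measurable_const,
          lintegral_tsum fun n ↦ (measurable_one.indicator (hs n)).aemeasurable]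
        simp [lintegral_indicator_one (hs _)]
    _ < ∞ := add_lt_top.2 ⟨measure_lt_top P _, h.lt_top⟩

lemma ProbabilityTheory.iIndepFun.iIndepSet_preimage {Ω ι β : Type*} [MeasurableSpace Ω]
    [MeasurableSpace β]
    {P : Measure Ω} {X : ι → Ω → β} (hX : ∀ i, Measurable (X i)) (hindep : iIndepFun X P)
    {A : ι → Set β} (hA : ∀ i, MeasurableSet (A i)) : iIndepSet (fun i ↦ X i ⁻¹' A i) P :=
  (iIndepSet_iff_meas_biInter fun i ↦ hX i (hA i)).2 fun S ↦
    hindep.measure_inter_preimage_eq_mul S fun i _ ↦ hA i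

lemma ae_frequently_mem_of_tsum_eq_top {Ω : Type*} [MeasurableSpace Ω] {P : Measure Ω}
    {s : ℕ → Set Ω} (hsm : ∀ n, MeasurableSet (s n))
    (hindep : iIndepSet s P) (hsum : ∑' n, P (s n) = ∞) : ∀ᵐ ω ∂P, ∃ᶠ n in atTop, ω ∈ s n := by
  have := hindep.isProbabilityMeasure
  have hlimsup :=
    (ae_mem_iff_measure_eq (MeasurableSet.measurableSet_limsup hsm).nullMeasurableSet).2
      (by rw [measure_limsup_eq_one hsm hindep hsum, measure_univ])
  filter_upwards [hlimsup] with ω hω using mem_limsup_iff_frequently_mem.1 hω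

lemma integrable_of_ae_eventually_abs_lt_succ {Ω : Type*} [MeasurableSpace Ω] {P : Measure Ω}
    {X : ℕ → Ω → ℝ} (hmeas : ∀ i, Measurable (X i))
    (hindep : iIndepFun X P) (hident : ∀ i, IdentDistrib (X i) (X 0) P P)
    (hsmall : ∀ᵐ ω ∂P, ∀ᶠ n in atTop, |X n ω| < n + 1) : Integrable (X 0) P := by
  have := hindep.isProbabilityMeasure
  by_contra hnot
  have hA (n : ℕ) : MeasurableSet {x : ℝ | (n : ℝ) + 1 ≤ |x|} :=
    measurableSet_le measurable_const measurable_abs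
  have hsum : ∑' n : ℕ, P (X n ⁻¹' {x | (n : ℝ) + 1 ≤ |x|}) = ∞ := by
    simp_rw [(hident _).measure_mem_eq (hA _)]
    exact not_ne_iff.1 fun h ↦
      hnot (integrable_of_tsum_measure_add_one_le_abs_ne_top (hmeas 0) h)
  have hlarge := ae_frequently_mem_of_tsum_eq_top (fun n ↦ hmeas n (hA n))
    (iIndepFun.iIndepSet_preimage hmeas hindep hA) hsum
  obtain ⟨ω, hsmall, hlarge⟩ := (hsmall.and hlarge).exists
  obtain ⟨n, hlarge, hsmall⟩ := (hlarge.and_eventually hsmall).exists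
  exact hlarge.not_gt hsmall

noncomputable def tailMean (x : ℕ → ℝ) (c : ℝ) (n : ℕ) : ℝ :=
  (n : ℝ)⁻¹ * ∑ i ∈ range n, |x i| * Set.indicator (Set.Ici c) 1 |x i|

lemma abs_lt_succ_of_iSup_tailMean_lt_one {x : ℕ → ℝ} {c : ℝ}
    (h : ⨆ n, ENNReal.ofReal (tailMean x c n) < 1) {m : ℕ} (hm : c ≤ |x m|) :
    |x m| < m + 1 := by
  have hterm : |x m| ≤ ∑ i ∈ range (m + 1), |x i| * Set.indicator (Set.Ici c) 1 |x i| := by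
    have := single_le_sum (f := fun i ↦ |x i| * Set.indicator (Set.Ici c) 1 |x i|)
      (fun i _ ↦ mul_nonneg (abs_nonneg _) (Set.indicator_nonneg (fun _ _ ↦ zero_le_one) _))
      (self_mem_range_succ m)
    simpa [Set.indicator_of_mem (Set.mem_Ici.2 hm)] using this
  have hmean : tailMean x c (m + 1) < 1 :=
    ofReal_lt_one.1 ((le_iSup (fun n ↦ ENNReal.ofReal (tailMean x c n)) (m + 1)).trans_lt h)
  have hpos : (0 : ℝ) < m + 1 := by positivity
  rw [tailMean, Nat.cast_succ, inv_mul_lt_one₀ hpos] at hmean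
  linarith

lemma eventually_abs_lt_succ_of_tendsto_iSup_tailMean {x : ℕ → ℝ}
    (h : Tendsto (fun c ↦ ⨆ n, ENNReal.ofReal (tailMean x c n)) atTop (nhds 0)) :
    ∀ᶠ m : ℕ in atTop, |x m| < m + 1 := by
  obtain ⟨c, hc⟩ := (h.eventually (gt_mem_nhds zero_lt_one)).exists
  filter_upwards [eventually_ge_atTop ⌈c⌉₊] with m hm
  rcases lt_or_ge |x m| c with hlt | hge
  · linarith [Nat.le_ceil c, (Nat.cast_le (α := ℝ)).2 hm]
  · exact abs_lt_succ_of_iSup_tailMean_lt_one hc hge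

lemma integral_smul_sum_dirac {α ι E : Type*} [MeasurableSpace α] [MeasurableSingletonClass α]
    [NormedAddCommGroup E] [NormedSpace ℝ E] [CompleteSpace E] (f : α → E) (c : ℝ≥0∞)
    (s : Finset ι) (x : ι → α) :
    ∫ y, f y ∂(c • ∑ i ∈ s, Measure.dirac (x i)) = c.toReal • ∑ i ∈ s, f (x i) := by
  rw [integral_smul_measure, integral_finsetSum_measure fun i _ ↦ integrable_dirac enorm_lt_top]
  simp only [integral_dirac]

theorem empirical_first_moments_tendsto_general
    {Ω : Type*} [MeasurableSpace Ω] (P : Measure Ω)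
    (X : ℕ → Ω → ℝ) (hmeas : ∀ i, Measurable (X i))
    (hindep : iIndepFun X P)
    (hident : ∀ i, IdentDistrib (X i) (X 0) P P)
    (hUI : ∀ᵐ ω ∂P, Tendsto
      (fun c : ℝ => ⨆ n : ℕ, ENNReal.ofReal
        ((n : ℝ)⁻¹ * ∑ i ∈ range n,
          |X i ω| * Set.indicator (Set.Ici c) 1 |X i ω|))
      atTop (nhds 0)) :
    Integrable (X 0) P ∧
      (∫ x, x ∂(P.map (X 0)) = ∫ ω, X 0 ω ∂P) ∧
      ∀ᵐ ω ∂P, Tendsto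
        (fun n : ℕ => ∫ y, y ∂((n : ℝ≥0∞)⁻¹ •
          ∑ i ∈ range n, Measure.dirac (X i ω)))
        atTop (nhds (∫ x, x ∂(P.map (X 0)))) := by
  have hint : Integrable (X 0) P := integrable_of_ae_eventually_abs_lt_succ hmeas hindep hident
    (hUI.mono fun _ ↦ eventually_abs_lt_succ_of_tendsto_iSup_tailMean)
  have hlaw : ∫ x, x ∂(P.map (X 0)) = ∫ ω, X 0 ω ∂P :=
    integral_map (hmeas 0).aemeasurable aestronglyMeasurable_id
  refine ⟨hint, hlaw, ?_⟩
  filter_upwards [strong_law_ae_real X hint (fun _ _ hij ↦ hindep.indepFun hij) hident]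
    with ω hω
  simpa only [integral_smul_sum_dirac, toReal_inv, toReal_natCast, smul_eq_mul, inv_mul_eq_div,
    hlaw] using hω

/-- If `X 0, X 1, …` are i.i.d. real random variables such that, almost surely,
`lim_{c → ∞} sup_{n} n⁻¹ ∑_{i < n} |X i| · 1_{[c,∞)}(|X i|) = 0`, then `X 0` is integrable
and, almost surely, the first moments of the empirical distributions
`n⁻¹ ∑_{i < n} δ_{X i ω}` converge to `∫ x d(law of X 0) = 𝔼[X 0]`. -/
theorem empirical_first_moments_tendsto
    {Ω : Type*} [MeasurableSpace Ω] (P : Measure Ω) [IsProbabilityMeasure P]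
    (X : ℕ → Ω → ℝ) (hmeas : ∀ i, Measurable (X i))
    (hindep : iIndepFun X P)
    (hident : ∀ i, IdentDistrib (X i) (X 0) P P)
    (hUI : ∀ᵐ ω ∂P, Tendsto
      (fun c : ℝ => ⨆ n : ℕ, ENNReal.ofReal
        ((n : ℝ)⁻¹ * ∑ i ∈ range n,
          |X i ω| * Set.indicator (Set.Ici c) 1 |X i ω|))
      atTop (nhds 0)) :
    Integrable (X 0) P ∧
      (∫ x, x ∂(P.map (X 0)) = ∫ ω, X 0 ω ∂P) ∧
      ∀ᵐ ω ∂P, Tendsto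
        (fun n : ℕ => ∫ y, y ∂((n : ℝ≥0∞)⁻¹ •
          ∑ i ∈ range n, Measure.dirac (X i ω)))
        atTop (nhds (∫ x, x ∂(P.map (X 0)))) :=
  empirical_first_moments_tendsto_general P X hmeas hindep hident hUI
end
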